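/- Let d ≥ 3 be an integer. Then ‖E_{f₁,f₂,f₃}[(Z_{f₃} H_d Z_{f₂} H_d Z_{f₁})^{⊗2} · Π^eq · ((Z_{f₃} H_d Z_{f₂} H_d Z_{f₁})^{⊗2})†] − (2/(d+1)) · Π^sym‖_op ≤ 1/(d(d+1)), where f₁, f₂, f₃ range independently and uniformly over all functions Fin d → Fin d. -/

import Mathlib

open Matrix
open scoped Kronecker

/-- The ℓ²→ℓ² operator norm of a matrix. -/
noncomputable def opNorm {n : Type*} [Fintype n] [DecidableEq n] (M : Matrix n n ℂ) : ℝ :=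
  ‖LinearMap.toContinuousLinearMap (Matrix.toEuclideanLin M)‖

/-- `Π^eq = Σ_x |x,x⟩⟨x,x|`. -/
noncomputable def PiEq (d : ℕ) : Matrix (Fin d × Fin d) (Fin d × Fin d) ℂ :=
  Matrix.of fun p q => if p.1 = p.2 ∧ q.1 = q.2 ∧ p.1 = q.1 then 1 else 0

/-- The swap operator `F|x,y⟩ = |y,x⟩`. -/
noncomputable def SwapF (d : ℕ) : Matrix (Fin d × Fin d) (Fin d × Fin d) ℂ :=
  Matrix.of fun p q => if p.1 = q.2 ∧ p.2 = q.1 then 1 else 0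

/-- `Π^sym = (1/2)(I + F)`. -/
noncomputable def PiSym (d : ℕ) : Matrix (Fin d × Fin d) (Fin d × Fin d) ℂ :=
  ((1 : ℂ) / 2) • ((1 : Matrix (Fin d × Fin d) (Fin d × Fin d) ℂ) + SwapF d)

/-- `ω_d = exp(2πi/d)`. -/
noncomputable def omegaC (d : ℕ) : ℂ := Complex.exp (2 * Real.pi * Complex.I / d)

/-- The diagonal phase matrix `Z_f` with `(Z_f)_{x,x} = ω_d^{f(x)}`. -/
noncomputable def Zmat (d : ℕ) (f : Fin d → Fin d) : Matrix (Fin d) (Fin d) ℂ :=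
  Matrix.diagonal fun x => omegaC d ^ (f x : ℕ)

/-- The discrete Fourier transform matrix, `(H_d)_{y,x} = ω_d^{x·y}/√d`. -/
noncomputable def Hmat (d : ℕ) : Matrix (Fin d) (Fin d) ℂ :=
  Matrix.of fun y x => omegaC d ^ ((x : ℕ) * (y : ℕ)) / (Real.sqrt d : ℂ)

/-- `Z_{f₃} H_d Z_{f₂} H_d Z_{f₁}`. -/
noncomputable def threeFold (d : ℕ) (f₁ f₂ f₃ : Fin d → Fin d) : Matrix (Fin d) (Fin d) ℂ :=
  Zmat d f₃ * Hmat d * Zmat d f₂ * Hmat d * Zmat d f₁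



lemma omega_ne (d : ℕ) : omegaC d ≠ 0 := Complex.exp_ne_zero _

lemma omega_prim {d : ℕ} (hd : d ≠ 0) : IsPrimitiveRoot (omegaC d) d := by
  unfold omegaC; exact Complex.isPrimitiveRoot_exp d hd

lemma omega_pow_d {d : ℕ} (hd : d ≠ 0) : omegaC d ^ d = 1 := (omega_prim hd).pow_eq_one

lemma star_omega_pow (d n : ℕ) : star (omegaC d ^ n) = (omegaC d ^ n)⁻¹ := by
  have h : star (omegaC d) = (omegaC d)⁻¹ := by
    show (starRingEnd ℂ) (omegaC d) = _
    rw [omegaC, ← Complex.exp_conj, ← Complex.exp_neg]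
    congr 1
    simp only [map_div₀, _root_.map_mul, Complex.conj_I, Complex.conj_ofReal, map_ofNat,
      Complex.conj_natCast]
    ring
  rw [star_pow, h, inv_pow]

lemma omega_pow_eq_iff {d : ℕ} (hd : d ≠ 0) (A B : ℕ) :
    omegaC d ^ A = omegaC d ^ B ↔ (A : ZMod d) = (B : ZMod d) := by
  have hω := omega_prim hd
  have hne : omegaC d ≠ 0 := omega_ne d
  have key : (omegaC d ^ A = omegaC d ^ B) ↔ omegaC d ^ ((A : ℤ) - (B : ℤ)) = 1 := by
    rw [zpow_sub₀ hne, zpow_natCast, zpow_natCast, div_eq_one_iff_eq (pow_ne_zero _ hne)]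
  rw [key, hω.zpow_eq_one_iff_dvd, ← ZMod.intCast_zmod_eq_zero_iff_dvd, Int.cast_sub,
    sub_eq_zero, Int.cast_natCast, Int.cast_natCast]

lemma geom_fin {d : ℕ} (z : ℂ) (hz : z ^ d = 1) :
    ∑ x : Fin d, z ^ (x : ℕ) = if z = 1 then (d : ℂ) else 0 := by
  rw [Fin.sum_univ_eq_sum_range]
  split_ifs with h
  · simp [h]
  · rw [geom_sum_eq h, hz]
    simp

lemma powMulComm (z : ℂ) (m n : ℕ) : z ^ (m * n) = (z ^ n) ^ m := by
  rw [mul_comm, pow_mul]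

lemma char_sum {d : ℕ} (hd : d ≠ 0) (A B : ℕ) :
    ∑ x : Fin d, omegaC d ^ ((x : ℕ) * A) * (omegaC d ^ ((x : ℕ) * B))⁻¹
      = if (A : ZMod d) = (B : ZMod d) then (d : ℂ) else 0 := by
  have hne : omegaC d ≠ 0 := omega_ne d
  have hz : (omegaC d ^ A * (omegaC d ^ B)⁻¹) ^ d = 1 := by
    rw [mul_pow, ← pow_mul, inv_pow, ← pow_mul, mul_comm A d, mul_comm B d,
      pow_mul, pow_mul, omega_pow_d hd, one_pow, one_pow, inv_one, mul_one]
  have hrw : ∀ x : Fin d, omegaC d ^ ((x : ℕ) * A) * (omegaC d ^ ((x : ℕ) * B))⁻¹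
      = (omegaC d ^ A * (omegaC d ^ B)⁻¹) ^ (x : ℕ) := by
    intro x
    rw [powMulComm, powMulComm _ _ B, ← inv_pow, mul_pow]
  rw [Finset.sum_congr rfl fun x _ => hrw x, geom_fin _ hz]
  congr 1
  rw [eq_iff_iff, ← div_eq_mul_inv, div_eq_one_iff_eq (pow_ne_zero _ hne),
    omega_pow_eq_iff hd]

open Finset

-- entries of Fin d cast to ZMod d
lemma finValCast {d : ℕ} (a b : Fin d) :
    (((a : ℕ) : ZMod d) = ((b : ℕ) : ZMod d)) ↔ a = b := by
  rw [ZMod.natCast_eq_natCast_iff, Nat.ModEq, Nat.mod_eq_of_lt a.isLt, Nat.mod_eq_of_lt b.isLt]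
  exact ⟨fun h => Fin.ext h, fun h => by rw [h]⟩

lemma Hterm {d : ℕ} (hd : d ≠ 0) (a b x : Fin d) :
    Hmat d a x * star (Hmat d b x)
      = omegaC d ^ ((x : ℕ) * (a : ℕ)) * (omegaC d ^ ((x : ℕ) * (b : ℕ)))⁻¹ * (1 / (d : ℂ)) := by
  have hs : ((Real.sqrt d : ℝ) : ℂ) * ((Real.sqrt d : ℝ) : ℂ) = (d : ℂ) := by
    rw [← Complex.ofReal_mul, Real.mul_self_sqrt (Nat.cast_nonneg d)]
    push_cast; ring
  have hstar : star ((Real.sqrt d : ℝ) : ℂ) = ((Real.sqrt d : ℝ) : ℂ) := by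
    rw [Complex.star_def, Complex.conj_ofReal]
  simp only [Hmat, of_apply, star_div₀, hstar, star_omega_pow]
  rw [div_mul_div_comm, hs, div_eq_mul_one_div]

lemma Hmat_unit {d : ℕ} (hd : d ≠ 0) : Hmat d * (Hmat d)ᴴ = 1 := by
  ext a b
  rw [Matrix.mul_apply]
  simp only [conjTranspose_apply]
  rw [Finset.sum_congr rfl fun x _ => Hterm hd a b x, ← Finset.sum_mul, char_sum hd]
  rcases eq_or_ne a b with rfl | h
  · rw [if_pos rfl, Matrix.one_apply_eq, mul_one_div]
    exact div_self (Nat.cast_ne_zero.mpr hd)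
  · rw [if_neg (fun hc => h ((finValCast a b).mp hc)), Matrix.one_apply_ne h, zero_mul]

lemma swap_apply {d : ℕ} (p q : Fin d × Fin d) :
    SwapF d p q = if q = (p.2, p.1) then 1 else 0 := by
  simp only [SwapF, of_apply]
  by_cases h : q = (p.2, p.1)
  · rw [if_pos h, if_pos ⟨by rw [h], by rw [h]⟩]
  · rw [if_neg h, if_neg]
    rintro ⟨h1, h2⟩
    exact h (Prod.ext h2.symm h1.symm)

lemma swap_apply' {d : ℕ} (p q : Fin d × Fin d) :
    SwapF d p q = if p = (q.2, q.1) then 1 else 0 := by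
  simp only [SwapF, of_apply]
  by_cases h : p = (q.2, q.1)
  · rw [if_pos h, if_pos ⟨by rw [h], by rw [h]⟩]
  · rw [if_neg h, if_neg]
    rintro ⟨h1, h2⟩
    exact h (Prod.ext h1 h2)

lemma swap_mul_kron {d : ℕ} (X Y : Matrix (Fin d) (Fin d) ℂ) :
    SwapF d * (X ⊗ₖ Y) = (Y ⊗ₖ X) * SwapF d := by
  ext p q
  rw [Matrix.mul_apply, Matrix.mul_apply]
  have hL : ∑ r : Fin d × Fin d, SwapF d p r * (X ⊗ₖ Y) r q = (X ⊗ₖ Y) (p.2, p.1) q := by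
    rw [Finset.sum_eq_single ((p.2, p.1) : Fin d × Fin d)]
    · rw [swap_apply, if_pos rfl, one_mul]
    · intro r _ hr; rw [swap_apply, if_neg hr, zero_mul]
    · intro h; exact absurd (Finset.mem_univ _) h
  have hR : ∑ r : Fin d × Fin d, (Y ⊗ₖ X) p r * SwapF d r q = (Y ⊗ₖ X) p (q.2, q.1) := by
    rw [Finset.sum_eq_single ((q.2, q.1) : Fin d × Fin d)]
    · rw [swap_apply', if_pos rfl, mul_one]
    · intro r _ hr; rw [swap_apply', if_neg hr, mul_zero]
    · intro h; exact absurd (Finset.mem_univ _) h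
  rw [hL, hR]
  simp only [Matrix.kroneckerMap_apply]
  ring

lemma kron_conjT {d : ℕ} (A B : Matrix (Fin d) (Fin d) ℂ) :
    (A ⊗ₖ B)ᴴ = Aᴴ ⊗ₖ Bᴴ := by
  ext p q
  simp [Matrix.conjTranspose_apply, Matrix.kroneckerMap_apply, star_mul', mul_comm]

noncomputable def H2 (d : ℕ) : Matrix (Fin d × Fin d) (Fin d × Fin d) ℂ := Hmat d ⊗ₖ Hmat d

lemma H2_unit {d : ℕ} (hd : d ≠ 0) : H2 d * (H2 d)ᴴ = 1 := by
  rw [H2, kron_conjT, ← Matrix.mul_kronecker_mul, Hmat_unit hd, Matrix.one_kronecker_one]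

lemma H2_swap {d : ℕ} (hd : d ≠ 0) : H2 d * SwapF d * (H2 d)ᴴ = SwapF d := by
  have h2 : SwapF d * (H2 d)ᴴ = (H2 d)ᴴ * SwapF d := by
    rw [H2, kron_conjT]; exact swap_mul_kron (Hmat d)ᴴ (Hmat d)ᴴ
  rw [Matrix.mul_assoc, h2, ← Matrix.mul_assoc, H2_unit hd, Matrix.one_mul]

lemma H2_one {d : ℕ} (hd : d ≠ 0) :
    H2 d * (1 : Matrix (Fin d × Fin d) (Fin d × Fin d) ℂ) * (H2 d)ᴴ = 1 := by
  rw [Matrix.mul_one, H2_unit hd]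

noncomputable def Bmat (d : ℕ) : Matrix (Fin d × Fin d) (Fin d × Fin d) ℂ :=
  Matrix.of fun p q =>
    if (((p.1 : ℕ) + (p.2 : ℕ) : ℕ) : ZMod d) = (((q.1 : ℕ) + (q.2 : ℕ) : ℕ) : ZMod d)
    then 1 / (d : ℂ) else 0

lemma piEq_apply₂ {d : ℕ} (r s : Fin d × Fin d) :
    PiEq d r s = (if r = s then 1 else 0) * (if s.1 = s.2 then 1 else 0) := by
  simp only [PiEq, of_apply]
  by_cases h1 : r = s
  · subst h1
    by_cases h2 : r.1 = r.2
    · rw [if_pos ⟨h2, h2, rfl⟩, if_pos rfl, if_pos h2, one_mul]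
    · rw [if_neg (fun hc => h2 hc.1), if_pos rfl, if_neg h2, one_mul]
  · rw [if_neg, if_neg h1, zero_mul]
    rintro ⟨ha, hb, hc⟩
    exact h1 (Prod.ext hc (by rw [← ha, hc, hb]))

lemma H2_piEq {d : ℕ} (hd : d ≠ 0) : H2 d * PiEq d * (H2 d)ᴴ = Bmat d := by
  ext p q
  have hstep : (H2 d * PiEq d) p = fun s => if s.1 = s.2 then H2 d p s else 0 := by
    funext s
    rw [Matrix.mul_apply]
    by_cases h : s.1 = s.2
    · simp [piEq_apply₂, h, mul_ite, Finset.sum_ite_eq']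
    · simp [piEq_apply₂, h]
  rw [Matrix.mul_apply]
  simp only [hstep, conjTranspose_apply, ite_mul, zero_mul]
  rw [Fintype.sum_prod_type]
  have hinner : ∀ x1 : Fin d,
      (∑ x2 : Fin d, if x1 = x2 then H2 d p (x1, x2) * star (H2 d q (x1, x2)) else 0)
        = H2 d p (x1, x1) * star (H2 d q (x1, x1)) := by
    intro x1
    rw [Finset.sum_ite_eq Finset.univ x1 (fun x2 => H2 d p (x1, x2) * star (H2 d q (x1, x2)))]
    simp
  rw [Finset.sum_congr rfl fun x1 _ => hinner x1]
  have hterm : ∀ x : Fin d, H2 d p (x, x) * star (H2 d q (x, x))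
      = omegaC d ^ ((x : ℕ) * ((p.1 : ℕ) + (p.2 : ℕ)))
          * (omegaC d ^ ((x : ℕ) * ((q.1 : ℕ) + (q.2 : ℕ))))⁻¹ * (1 / (d : ℂ) * (1 / (d : ℂ))) := by
    intro x
    have e1 := Hterm hd p.1 q.1 x
    have e2 := Hterm hd p.2 q.2 x
    simp only [H2, Matrix.kroneckerMap_apply]
    rw [star_mul']
    calc Hmat d p.1 x * Hmat d p.2 x * (star (Hmat d q.1 x) * star (Hmat d q.2 x))
        = (Hmat d p.1 x * star (Hmat d q.1 x)) * (Hmat d p.2 x * star (Hmat d q.2 x)) := by ring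
      _ = _ := by
          rw [e1, e2]
          simp only [mul_add, pow_add, mul_inv]
          ring
  rw [Finset.sum_congr rfl fun x _ => hterm x, ← Finset.sum_mul, char_sum hd]
  simp only [Bmat, of_apply]
  split_ifs with h
  · field_simp
  · rw [zero_mul]

def cnt {d : ℕ} (a b x : Fin d) : ℕ := (if x = a then 1 else 0) + (if x = b then 1 else 0)

lemma cnt_le {d : ℕ} (a b x : Fin d) : cnt a b x ≤ 2 := by
  unfold cnt; split_ifs <;> omega

lemma cnt_iff {d : ℕ} (a b c e : Fin d) :
    (∀ x : Fin d, cnt a b x = cnt c e x) ↔ ((c = a ∧ e = b) ∨ (c = b ∧ e = a)) := by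
  constructor
  · intro h
    by_cases hca : c = a
    · subst hca
      left
      refine ⟨rfl, ?_⟩
      have hb := h b
      unfold cnt at hb
      by_cases hbe : b = e
      · exact hbe.symm
      · by_cases hbc : b = c <;> simp [hbc, hbe] at hb
        split_ifs at hb with hce
        · exact absurd (hbc.trans hce) hbe
        · omega
    · right
      have hc := h c
      unfold cnt at hc
      have hcb : c = b := by
        by_cases hcb : c = b
        · exact hcb
        · by_cases hce : c = e <;> simp [hca, hcb, hce] at hc
          by_cases heb : e = b
          · exact hce.trans heb
          · simp [heb] at hc
            split_ifs at hc <;> omega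
      refine ⟨hcb, ?_⟩
      subst hcb
      have ha := h a
      unfold cnt at ha
      by_cases hae : a = e
      · exact hae.symm
      · by_cases hac : a = c
        · exact absurd hac.symm hca
        · simp [hac, hae, Ne.symm hca] at ha
  · rintro (⟨rfl, rfl⟩ | ⟨rfl, rfl⟩) x
    · rfl
    · unfold cnt; omega

lemma small_cast_iff {d : ℕ} (hd3 : 3 ≤ d) {m n : ℕ} (hm : m ≤ 2) (hn : n ≤ 2) :
    ((m : ZMod d) = (n : ZMod d)) ↔ m = n := by
  rw [ZMod.natCast_eq_natCast_iff, Nat.ModEq, Nat.mod_eq_of_lt (by omega), Nat.mod_eq_of_lt (by omega)]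

lemma sum_phase {d : ℕ} (hd3 : 3 ≤ d) (a b c e : Fin d) :
    ∑ f : Fin d → Fin d,
        omegaC d ^ ((f a : ℕ) + (f b : ℕ)) * (omegaC d ^ ((f c : ℕ) + (f e : ℕ)))⁻¹
      = if (c = a ∧ e = b) ∨ (c = b ∧ e = a) then ((d : ℂ) ^ d) else 0 := by
  have hd : d ≠ 0 := by omega
  have hrw : ∀ f : Fin d → Fin d,
      omegaC d ^ ((f a : ℕ) + (f b : ℕ)) * (omegaC d ^ ((f c : ℕ) + (f e : ℕ)))⁻¹
        = ∏ x : Fin d,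
            (omegaC d ^ ((f x : ℕ) * cnt a b x) * (omegaC d ^ ((f x : ℕ) * cnt c e x))⁻¹) := by
    intro f
    rw [Finset.prod_mul_distrib, Finset.prod_pow_eq_pow_sum, Finset.prod_inv_distrib,
      Finset.prod_pow_eq_pow_sum]
    have h1 : ∑ x : Fin d, (f x : ℕ) * cnt a b x = (f a : ℕ) + (f b : ℕ) := by
      unfold cnt
      simp only [mul_add, mul_ite, mul_one, mul_zero, Finset.sum_add_distrib,
        Finset.sum_ite_eq' Finset.univ, Finset.mem_univ, if_true]
    have h2 : ∑ x : Fin d, (f x : ℕ) * cnt c e x = (f c : ℕ) + (f e : ℕ) := by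
      unfold cnt
      simp only [mul_add, mul_ite, mul_one, mul_zero, Finset.sum_add_distrib,
        Finset.sum_ite_eq' Finset.univ, Finset.mem_univ, if_true]
    rw [h1, h2]
  rw [Finset.sum_congr rfl fun f _ => hrw f]
  rw [← Fintype.piFinset_univ]
  have hswap := Finset.prod_univ_sum (fun _ : Fin d => (Finset.univ : Finset (Fin d)))
    (fun x v => omegaC d ^ ((v : ℕ) * cnt a b x) * (omegaC d ^ ((v : ℕ) * cnt c e x))⁻¹)
  rw [← hswap]
  have hx : ∀ x : Fin d,
      (∑ v : Fin d, omegaC d ^ ((v : ℕ) * cnt a b x) * (omegaC d ^ ((v : ℕ) * cnt c e x))⁻¹)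
        = if cnt a b x = cnt c e x then (d : ℂ) else 0 := by
    intro x
    rw [char_sum hd]
    congr 1
    rw [eq_iff_iff, small_cast_iff hd3 (cnt_le a b x) (cnt_le c e x)]
  rw [Finset.prod_congr rfl fun x _ => hx x]
  by_cases hall : ∀ x : Fin d, cnt a b x = cnt c e x
  · rw [if_pos ((cnt_iff a b c e).mp hall)]
    rw [Finset.prod_congr rfl fun x _ => if_pos (hall x), Finset.prod_const,
      Finset.card_univ, Fintype.card_fin]
  · push_neg at hall
    obtain ⟨x, hx0⟩ := hall
    rw [Finset.prod_eq_zero (Finset.mem_univ x)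
        (show (if cnt a b x = cnt c e x then (d : ℂ) else 0) = 0 from if_neg hx0),
      if_neg (fun hc => hx0 (((cnt_iff a b c e).mpr hc) x))]

noncomputable def Kf (d : ℕ) (f : Fin d → Fin d) : Matrix (Fin d × Fin d) (Fin d × Fin d) ℂ :=
  Zmat d f ⊗ₖ Zmat d f

lemma Kf_diag {d : ℕ} (f : Fin d → Fin d) :
    Kf d f = Matrix.diagonal (fun p => omegaC d ^ ((f p.1 : ℕ) + (f p.2 : ℕ))) := by
  rw [Kf, Zmat, Matrix.diagonal_kronecker_diagonal]
  exact congrArg Matrix.diagonal (funext fun p => (pow_add _ _ _).symm)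

lemma Kconj_apply {d : ℕ} (f : Fin d → Fin d) (X : Matrix (Fin d × Fin d) (Fin d × Fin d) ℂ)
    (p q : Fin d × Fin d) :
    (Kf d f * X * (Kf d f)ᴴ) p q
      = omegaC d ^ ((f p.1 : ℕ) + (f p.2 : ℕ))
          * (omegaC d ^ ((f q.1 : ℕ) + (f q.2 : ℕ)))⁻¹ * X p q := by
  rw [Kf_diag, Matrix.diagonal_conjTranspose, Matrix.mul_diagonal, Matrix.diagonal_mul]
  rw [Pi.star_apply, star_omega_pow]
  ring

lemma Kconj_eq_self {d : ℕ} (f : Fin d → Fin d) (X : Matrix (Fin d × Fin d) (Fin d × Fin d) ℂ)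
    (hX : ∀ p q, X p q ≠ 0 → (q = p ∨ (q.1 = p.2 ∧ q.2 = p.1))) :
    Kf d f * X * (Kf d f)ᴴ = X := by
  ext p q
  rw [Kconj_apply]
  by_cases h : X p q = 0
  · rw [h, mul_zero]
  · have hsum : (f q.1 : ℕ) + (f q.2 : ℕ) = (f p.1 : ℕ) + (f p.2 : ℕ) := by
      rcases hX p q h with rfl | ⟨h1, h2⟩
      · rfl
      · rw [h1, h2, Nat.add_comm]
    rw [hsum, mul_inv_cancel₀ (pow_ne_zero _ (omega_ne d)), one_mul]

lemma sum_Kconj_invariant {d : ℕ} (X : Matrix (Fin d × Fin d) (Fin d × Fin d) ℂ)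
    (hX : ∀ p q, X p q ≠ 0 → (q = p ∨ (q.1 = p.2 ∧ q.2 = p.1))) :
    ∑ f : Fin d → Fin d, Kf d f * X * (Kf d f)ᴴ = ((d : ℂ) ^ d) • X := by
  rw [Finset.sum_congr rfl fun f _ => Kconj_eq_self f X hX, Finset.sum_const,
    Finset.card_univ, Fintype.card_fun, Fintype.card_fin, ← Nat.cast_smul_eq_nsmul ℂ,
    Nat.cast_pow]

lemma one_support {d : ℕ} : ∀ p q : Fin d × Fin d,
    (1 : Matrix (Fin d × Fin d) (Fin d × Fin d) ℂ) p q ≠ 0 →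
      (q = p ∨ (q.1 = p.2 ∧ q.2 = p.1)) := by
  intro p q h
  left
  by_contra hne
  exact h (Matrix.one_apply_ne fun hc => hne hc.symm)

lemma swap_support {d : ℕ} : ∀ p q : Fin d × Fin d,
    SwapF d p q ≠ 0 → (q = p ∨ (q.1 = p.2 ∧ q.2 = p.1)) := by
  intro p q h
  rw [swap_apply] at h
  right
  by_contra hne
  refine h (if_neg fun hc => hne ?_)
  rw [hc]
  exact ⟨rfl, rfl⟩

lemma piEq_support {d : ℕ} : ∀ p q : Fin d × Fin d,
    PiEq d p q ≠ 0 → (q = p ∨ (q.1 = p.2 ∧ q.2 = p.1)) := by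
  intro p q h
  rw [piEq_apply₂] at h
  left
  by_contra hne
  exact h (by rw [if_neg fun hc => hne hc.symm, zero_mul])

lemma sum_Kconj_Bmat {d : ℕ} (hd3 : 3 ≤ d) :
    ∑ f : Fin d → Fin d, Kf d f * Bmat d * (Kf d f)ᴴ
      = ((d : ℂ) ^ d) • (((1 : ℂ) / d) • (1 + SwapF d - PiEq d)) := by
  have hd : d ≠ 0 := by omega
  ext p q
  rw [Matrix.sum_apply]
  simp only [Kconj_apply]
  rw [← Finset.sum_mul, sum_phase hd3 p.1 p.2 q.1 q.2]
  simp only [Matrix.smul_apply, Matrix.sub_apply, Matrix.add_apply, smul_eq_mul]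
  by_cases hcond : (q.1 = p.1 ∧ q.2 = p.2) ∨ (q.1 = p.2 ∧ q.2 = p.1)
  · rw [if_pos hcond]
    have hB : Bmat d p q = 1 / (d : ℂ) := by
      rw [Bmat, of_apply, if_pos]
      rcases hcond with ⟨h1, h2⟩ | ⟨h1, h2⟩ <;> rw [h1, h2]
      rw [Nat.add_comm]
    have hent : (1 : Matrix (Fin d × Fin d) (Fin d × Fin d) ℂ) p q
        + SwapF d p q - PiEq d p q = 1 := by
      rcases hcond with ⟨h1, h2⟩ | ⟨h1, h2⟩
      · have hq : q = p := Prod.ext h1 h2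
        subst hq
        rw [Matrix.one_apply_eq, swap_apply, piEq_apply₂, if_pos rfl, one_mul]
        by_cases hpp : q.1 = q.2
        · rw [if_pos (by rw [Prod.ext_iff]; exact ⟨hpp, hpp.symm⟩ : q = (q.2, q.1)), if_pos hpp]
          ring
        · rw [if_neg (fun hc => hpp (by rw [Prod.ext_iff] at hc; exact hc.1)), if_neg hpp]
          ring
      · have hq : q = (p.2, p.1) := Prod.ext h1 h2
        subst hq
        rw [swap_apply, if_pos rfl, piEq_apply₂]
        by_cases hpp : p.1 = p.2
        · have hqp : p = (p.2, p.1) := Prod.ext hpp hpp.symm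
          rw [Matrix.one_apply, if_pos hqp]
          simp [hpp]
        · have hne : ¬ p = (p.2, p.1) :=
            fun hc => hpp (by rw [Prod.ext_iff] at hc; exact hc.1)
          rw [Matrix.one_apply, if_neg hne]
          simp
    rw [hB, hent, mul_one]
  · rw [if_neg hcond, zero_mul]
    have h1 : (1 : Matrix (Fin d × Fin d) (Fin d × Fin d) ℂ) p q = 0 :=
      Matrix.one_apply_ne fun h => hcond (Or.inl ⟨by rw [h], by rw [h]⟩)
    have h2 : SwapF d p q = 0 := by
      rw [swap_apply, if_neg]
      intro h
      exact hcond (Or.inr ⟨by rw [h], by rw [h]⟩)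
    have h3 : PiEq d p q = 0 := by
      rw [piEq_apply₂, if_neg (fun h : p = q => hcond (Or.inl ⟨by rw [h], by rw [h]⟩)), zero_mul]
    rw [h1, h2, h3]
    ring

lemma H2_comb {d : ℕ} (hd : d ≠ 0) :
    H2 d * (1 + SwapF d - PiEq d) * (H2 d)ᴴ = 1 + SwapF d - Bmat d := by
  calc H2 d * (1 + SwapF d - PiEq d) * (H2 d)ᴴ
      = H2 d * 1 * (H2 d)ᴴ + H2 d * SwapF d * (H2 d)ᴴ - H2 d * PiEq d * (H2 d)ᴴ := by
        simp only [Matrix.mul_add, Matrix.mul_sub, Matrix.add_mul, Matrix.sub_mul]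
    _ = 1 + SwapF d - Bmat d := by rw [H2_one hd, H2_swap hd, H2_piEq hd]

lemma big_eq {d : ℕ} (f₁ f₂ f₃ : Fin d → Fin d) :
    (threeFold d f₁ f₂ f₃ ⊗ₖ threeFold d f₁ f₂ f₃) * PiEq d *
        (threeFold d f₁ f₂ f₃ ⊗ₖ threeFold d f₁ f₂ f₃)ᴴ
      = Kf d f₃ * (H2 d * (Kf d f₂ * (H2 d * (Kf d f₁ * PiEq d * (Kf d f₁)ᴴ) * (H2 d)ᴴ)
          * (Kf d f₂)ᴴ) * (H2 d)ᴴ) * (Kf d f₃)ᴴ := by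
  simp only [threeFold, H2, Kf, Matrix.mul_kronecker_mul, Matrix.conjTranspose_mul,
    Matrix.mul_assoc]

lemma total_sum {d : ℕ} (hd3 : 3 ≤ d) :
    ∑ f : (Fin d → Fin d) × (Fin d → Fin d) × (Fin d → Fin d),
        (threeFold d f.1 f.2.1 f.2.2 ⊗ₖ threeFold d f.1 f.2.1 f.2.2) * PiEq d *
          (threeFold d f.1 f.2.1 f.2.2 ⊗ₖ threeFold d f.1 f.2.1 f.2.2)ᴴ
      = (((d : ℂ) ^ d) ^ 3) •
          (((1 : ℂ) / d) • ((1 : Matrix (Fin d × Fin d) (Fin d × Fin d) ℂ) + SwapF d)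
            - ((1 : ℂ) / (d : ℂ) ^ 2) • (1 + SwapF d - PiEq d)) := by
  have hd : d ≠ 0 := by omega
  have hbig : ∀ f₁ f₂ f₃ : Fin d → Fin d,
      (threeFold d f₁ f₂ f₃ ⊗ₖ threeFold d f₁ f₂ f₃) * PiEq d *
          (threeFold d f₁ f₂ f₃ ⊗ₖ threeFold d f₁ f₂ f₃)ᴴ
        = Kf d f₃ * (H2 d * (Kf d f₂ * Bmat d * (Kf d f₂)ᴴ) * (H2 d)ᴴ) * (Kf d f₃)ᴴ := by
    intro f₁ f₂ f₃
    rw [big_eq, Kconj_eq_self f₁ _ piEq_support, H2_piEq hd]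
  calc ∑ f : (Fin d → Fin d) × (Fin d → Fin d) × (Fin d → Fin d),
        (threeFold d f.1 f.2.1 f.2.2 ⊗ₖ threeFold d f.1 f.2.1 f.2.2) * PiEq d *
          (threeFold d f.1 f.2.1 f.2.2 ⊗ₖ threeFold d f.1 f.2.1 f.2.2)ᴴ
      = ∑ f₁ : Fin d → Fin d, ∑ f₂ : Fin d → Fin d, ∑ f₃ : Fin d → Fin d,
          Kf d f₃ * (H2 d * (Kf d f₂ * Bmat d * (Kf d f₂)ᴴ) * (H2 d)ᴴ) * (Kf d f₃)ᴴ := by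
        rw [Fintype.sum_prod_type]
        refine Finset.sum_congr rfl fun f₁ _ => ?_
        rw [Fintype.sum_prod_type]
        exact Finset.sum_congr rfl fun f₂ _ =>
          Finset.sum_congr rfl fun f₃ _ => hbig f₁ f₂ f₃
    _ = ((d : ℂ) ^ d) • ∑ f₂ : Fin d → Fin d, ∑ f₃ : Fin d → Fin d,
          Kf d f₃ * (H2 d * (Kf d f₂ * Bmat d * (Kf d f₂)ᴴ) * (H2 d)ᴴ) * (Kf d f₃)ᴴ := by
        rw [Finset.sum_const, Finset.card_univ, Fintype.card_fun, Fintype.card_fin,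
          ← Nat.cast_smul_eq_nsmul ℂ, Nat.cast_pow]
    _ = ((d : ℂ) ^ d) • ∑ f₃ : Fin d → Fin d,
          Kf d f₃ * (H2 d * (∑ f₂ : Fin d → Fin d, Kf d f₂ * Bmat d * (Kf d f₂)ᴴ)
            * (H2 d)ᴴ) * (Kf d f₃)ᴴ := by
        rw [Finset.sum_comm]
        congr 1
        refine Finset.sum_congr rfl fun f₃ _ => ?_
        rw [Finset.mul_sum, Finset.sum_mul, Finset.mul_sum, Finset.sum_mul]
    _ = ((d : ℂ) ^ d) • ∑ f₃ : Fin d → Fin d,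
          ((d : ℂ) ^ d) • (((1 : ℂ) / d) • (Kf d f₃ * (1 + SwapF d - Bmat d) * (Kf d f₃)ᴴ)) := by
        rw [sum_Kconj_Bmat hd3]
        refine congrArg _ (Finset.sum_congr rfl fun f₃ _ => ?_)
        rw [Matrix.mul_smul, Matrix.mul_smul, Matrix.smul_mul, Matrix.smul_mul,
          Matrix.mul_smul, Matrix.mul_smul, Matrix.smul_mul, Matrix.smul_mul, H2_comb hd]
    _ = ((d : ℂ) ^ d) • (((d : ℂ) ^ d) • (((1 : ℂ) / d) •
          (∑ f₃ : Fin d → Fin d, (Kf d f₃ * 1 * (Kf d f₃)ᴴ)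
            + ∑ f₃ : Fin d → Fin d, (Kf d f₃ * SwapF d * (Kf d f₃)ᴴ)
            - ∑ f₃ : Fin d → Fin d, (Kf d f₃ * Bmat d * (Kf d f₃)ᴴ)))) := by
        rw [← Finset.smul_sum, ← Finset.smul_sum, ← Finset.sum_add_distrib,
          ← Finset.sum_sub_distrib]
        congr 2
        refine congrArg _ (Finset.sum_congr rfl fun f₃ _ => ?_)
        simp only [Matrix.mul_add, Matrix.mul_sub, Matrix.add_mul, Matrix.sub_mul]
    _ = ((d : ℂ) ^ d) • (((d : ℂ) ^ d) • (((1 : ℂ) / d) •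
          ((((d : ℂ) ^ d) • (1 : Matrix (Fin d × Fin d) (Fin d × Fin d) ℂ))
            + (((d : ℂ) ^ d) • SwapF d)
            - (((d : ℂ) ^ d) • (((1 : ℂ) / d) • (1 + SwapF d - PiEq d)))))) := by
        rw [sum_Kconj_invariant _ one_support, sum_Kconj_invariant _ swap_support,
          sum_Kconj_Bmat hd3]
    _ = (((d : ℂ) ^ d) ^ 3) •
          (((1 : ℂ) / d) • ((1 : Matrix (Fin d × Fin d) (Fin d × Fin d) ℂ) + SwapF d)
            - ((1 : ℂ) / (d : ℂ) ^ 2) • (1 + SwapF d - PiEq d)) := by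
        have hdc : (d : ℂ) ≠ 0 := Nat.cast_ne_zero.mpr hd
        match_scalars <;> field_simp <;> ring

lemma opNorm_le_schur {n : Type*} [Fintype n] [DecidableEq n] (M : Matrix n n ℂ) (r : ℝ)
    (hr : 0 ≤ r) (hrow : ∀ i, ∑ j, ‖M i j‖ ≤ r) (hcol : ∀ j, ∑ i, ‖M i j‖ ≤ r) :
    opNorm M ≤ r := by
  rw [opNorm]
  refine ContinuousLinearMap.opNorm_le_bound _ hr fun v => ?_
  have happ : ∀ i, (LinearMap.toContinuousLinearMap (Matrix.toEuclideanLin M) v) i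
      = ∑ j, M i j * v j := by
    intro i
    rfl
  have hnn : ∀ i j, (0:ℝ) ≤ ‖M i j‖ := fun i j => norm_nonneg _
  have key : ∀ i, ‖∑ j, M i j * v j‖ ^ 2 ≤ r * ∑ j, ‖M i j‖ * ‖v j‖ ^ 2 := by
    intro i
    have h1 : ‖∑ j, M i j * v j‖ ≤ ∑ j, ‖M i j‖ * ‖v j‖ := by
      refine le_trans (norm_sum_le _ _) ?_
      refine Finset.sum_le_sum fun j _ => ?_
      rw [norm_mul]
    have h2 : (∑ j, ‖M i j‖ * ‖v j‖) ^ 2 ≤ (∑ j, ‖M i j‖) * ∑ j, ‖M i j‖ * ‖v j‖ ^ 2 := by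
      have := Finset.sum_mul_sq_le_sq_mul_sq Finset.univ
        (fun j => Real.sqrt ‖M i j‖) (fun j => Real.sqrt ‖M i j‖ * ‖v j‖)
      calc (∑ j, ‖M i j‖ * ‖v j‖) ^ 2
          = (∑ j, Real.sqrt ‖M i j‖ * (Real.sqrt ‖M i j‖ * ‖v j‖)) ^ 2 := by
            congr 1
            refine Finset.sum_congr rfl fun j _ => ?_
            rw [← mul_assoc, Real.mul_self_sqrt (hnn i j)]
        _ ≤ (∑ j, Real.sqrt ‖M i j‖ ^ 2) * ∑ j, (Real.sqrt ‖M i j‖ * ‖v j‖) ^ 2 := this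
        _ = (∑ j, ‖M i j‖) * ∑ j, ‖M i j‖ * ‖v j‖ ^ 2 := by
            congr 1
            · exact Finset.sum_congr rfl fun j _ => Real.sq_sqrt (hnn i j)
            · refine Finset.sum_congr rfl fun j _ => ?_
              rw [mul_pow, Real.sq_sqrt (hnn i j)]
    have h3 : (∑ j, ‖M i j‖) * (∑ j, ‖M i j‖ * ‖v j‖ ^ 2) ≤ r * ∑ j, ‖M i j‖ * ‖v j‖ ^ 2 := by
      refine mul_le_mul_of_nonneg_right (hrow i) ?_
      exact Finset.sum_nonneg fun j _ => mul_nonneg (hnn i j) (sq_nonneg _)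
    calc ‖∑ j, M i j * v j‖ ^ 2 ≤ (∑ j, ‖M i j‖ * ‖v j‖) ^ 2 := by
          refine pow_le_pow_left₀ (norm_nonneg _) h1 2
      _ ≤ (∑ j, ‖M i j‖) * ∑ j, ‖M i j‖ * ‖v j‖ ^ 2 := h2
      _ ≤ r * ∑ j, ‖M i j‖ * ‖v j‖ ^ 2 := h3
  have hsum : ∑ i, ‖∑ j, M i j * v j‖ ^ 2 ≤ (r * ‖v‖) ^ 2 := by
    have hv2 : ‖v‖ ^ 2 = ∑ j, ‖v j‖ ^ 2 := by
      rw [EuclideanSpace.norm_eq, Real.sq_sqrt]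
      exact Finset.sum_nonneg fun j _ => sq_nonneg _
    calc ∑ i, ‖∑ j, M i j * v j‖ ^ 2
        ≤ ∑ i, r * ∑ j, ‖M i j‖ * ‖v j‖ ^ 2 := Finset.sum_le_sum fun i _ => key i
      _ = r * ∑ j, (∑ i, ‖M i j‖) * ‖v j‖ ^ 2 := by
          rw [← Finset.mul_sum, Finset.sum_comm]
          congr 1
          refine Finset.sum_congr rfl fun j _ => ?_
          rw [Finset.sum_mul]
      _ ≤ r * ∑ j, r * ‖v j‖ ^ 2 := by
          refine mul_le_mul_of_nonneg_left ?_ hr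
          refine Finset.sum_le_sum fun j _ => ?_
          exact mul_le_mul_of_nonneg_right (hcol j) (sq_nonneg _)
      _ = (r * ‖v‖) ^ 2 := by
          rw [← Finset.mul_sum, ← hv2]
          ring
  have hnorm : ‖LinearMap.toContinuousLinearMap (Matrix.toEuclideanLin M) v‖ ^ 2
      = ∑ i, ‖∑ j, M i j * v j‖ ^ 2 := by
    rw [EuclideanSpace.norm_eq, Real.sq_sqrt (Finset.sum_nonneg fun i _ => sq_nonneg _)]
    exact Finset.sum_congr rfl fun i _ => by rw [happ i]
  have := hsum
  rw [← hnorm] at this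
  exact (pow_le_pow_iff_left₀ (norm_nonneg _) (mul_nonneg hr (norm_nonneg _))
    two_ne_zero).mp this

lemma norm_ofReal' (x : ℝ) : ‖((x : ℝ) : ℂ)‖ = |x| := by
  rw [Complex.norm_real, Real.norm_eq_abs]

noncomputable def coefR1 (d : ℕ) : ℝ := 1 / (d : ℝ) - 1 / (d : ℝ) ^ 2 - 1 / ((d : ℝ) + 1)

noncomputable def coefR2 (d : ℕ) : ℝ := 1 / (d : ℝ) ^ 2

noncomputable def Dclosed (d : ℕ) : Matrix (Fin d × Fin d) (Fin d × Fin d) ℂ :=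
  ((coefR1 d : ℝ) : ℂ) • (1 + SwapF d) + ((coefR2 d : ℝ) : ℂ) • PiEq d

lemma Dclosed_apply {d : ℕ} (p q : Fin d × Fin d) :
    Dclosed d p q = ((coefR1 d : ℝ) : ℂ) * ((1 : Matrix (Fin d × Fin d) (Fin d × Fin d) ℂ) p q
        + SwapF d p q) + ((coefR2 d : ℝ) : ℂ) * PiEq d p q := by
  simp [Dclosed, Matrix.add_apply, Matrix.smul_apply, smul_eq_mul]
  ring

lemma one_apply_symm {d : ℕ} (p q : Fin d × Fin d) :
    (1 : Matrix (Fin d × Fin d) (Fin d × Fin d) ℂ) p q = if q = p then 1 else 0 := by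
  rw [Matrix.one_apply]
  exact if_congr eq_comm rfl rfl

lemma piEq_symm {d : ℕ} (p q : Fin d × Fin d) : PiEq d p q = PiEq d q p := by
  simp only [PiEq, of_apply]
  apply if_congr _ rfl rfl
  constructor
  · rintro ⟨a, b, c⟩; exact ⟨b, a, c.symm⟩
  · rintro ⟨a, b, c⟩; exact ⟨b, a, c.symm⟩

lemma Dclosed_symm {d : ℕ} (p q : Fin d × Fin d) : Dclosed d p q = Dclosed d q p := by
  rw [Dclosed_apply, Dclosed_apply, one_apply_symm p q, Matrix.one_apply,
    (swap_apply' p q).trans (swap_apply q p).symm, piEq_symm p q]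

lemma Dclosed_row {d : ℕ} (hd3 : 3 ≤ d) (p : Fin d × Fin d) :
    ∑ q, ‖Dclosed d p q‖ ≤ 1 / ((d : ℝ) * ((d : ℝ) + 1)) := by
  have hd3R : (3 : ℝ) ≤ (d : ℝ) := by exact_mod_cast hd3
  have hdR : (0 : ℝ) < (d : ℝ) := by linarith
  have hdR1 : (0 : ℝ) < (d : ℝ) + 1 := by linarith
  have hr1val : coefR1 d = -(1 / ((d : ℝ) ^ 2 * ((d : ℝ) + 1))) := by
    rw [coefR1]; field_simp; ring
  have hr1abs : |coefR1 d| = 1 / ((d : ℝ) ^ 2 * ((d : ℝ) + 1)) := by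
    rw [hr1val, abs_neg, abs_of_nonneg (by positivity)]
  by_cases hp : p.1 = p.2
  · have hpp : ((p.2, p.1) : Fin d × Fin d) = p := Prod.ext hp.symm hp
    have hval : ∀ q, ‖Dclosed d p q‖
        = if q = p then |2 * coefR1 d + coefR2 d| else 0 := by
      intro q
      by_cases hq : q = p
      · rw [if_pos hq, Dclosed_apply, hq, Matrix.one_apply_eq, swap_apply, if_pos hpp.symm,
          piEq_apply₂, if_pos rfl, if_pos hp]
        rw [show ((coefR1 d : ℝ) : ℂ) * (1 + 1) + ((coefR2 d : ℝ) : ℂ) * (1 * 1)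
            = ((2 * coefR1 d + coefR2 d : ℝ) : ℂ) by push_cast; ring, norm_ofReal']
      · rw [if_neg hq, Dclosed_apply, Matrix.one_apply_ne (fun h => hq h.symm), swap_apply,
          if_neg (by rw [hpp]; exact hq), piEq_apply₂,
          if_neg (fun h : p = q => hq h.symm), zero_mul, mul_zero, add_zero, add_zero,
          mul_zero, norm_zero]
    rw [Finset.sum_congr rfl fun q _ => hval q,
      Finset.sum_ite_eq' Finset.univ p fun _ => |2 * coefR1 d + coefR2 d|]
    simp only [Finset.mem_univ, if_true]
    have hv : 2 * coefR1 d + coefR2 d = ((d : ℝ) - 1) / ((d : ℝ) ^ 2 * ((d : ℝ) + 1)) := by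
      rw [coefR1, coefR2]; field_simp; ring
    rw [hv, abs_of_nonneg (div_nonneg (by linarith) (by positivity)),
      div_le_div_iff₀ (by positivity) (by positivity)]
    nlinarith
  · have hnp : p ≠ (p.2, p.1) := fun h => hp (by rw [Prod.ext_iff] at h; exact h.1)
    have hval : ∀ q, ‖Dclosed d p q‖
        = (if q = p then |coefR1 d| else 0) + (if q = (p.2, p.1) then |coefR1 d| else 0) := by
      intro q
      have e3 : PiEq d p q = 0 := by
        rw [piEq_apply₂]
        by_cases h : p = q
        · rw [if_pos h, if_neg (by rw [← h]; exact hp), mul_zero]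
        · rw [if_neg h, zero_mul]
      rw [Dclosed_apply, e3, mul_zero, add_zero, one_apply_symm, swap_apply]
      by_cases hq : q = p
      · rw [if_pos hq, if_pos hq, if_neg (fun h => hnp (hq.symm.trans h)),
          if_neg (fun h => hnp (hq.symm.trans h)), add_zero, add_zero,
          show ((coefR1 d : ℝ) : ℂ) * 1 = ((coefR1 d : ℝ) : ℂ) by ring, norm_ofReal']
      · rw [if_neg hq, if_neg hq, zero_add]
        by_cases hq2 : q = (p.2, p.1)
        · rw [if_pos hq2, if_pos hq2, zero_add,
            show ((coefR1 d : ℝ) : ℂ) * 1 = ((coefR1 d : ℝ) : ℂ) by ring, norm_ofReal']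
        · rw [if_neg hq2, if_neg hq2, mul_zero, norm_zero, add_zero]
    rw [Finset.sum_congr rfl fun q _ => hval q, Finset.sum_add_distrib,
      Finset.sum_ite_eq' Finset.univ p fun _ => |coefR1 d|,
      Finset.sum_ite_eq' Finset.univ ((p.2, p.1) : Fin d × Fin d) fun _ => |coefR1 d|]
    simp only [Finset.mem_univ, if_true]
    rw [hr1abs, ← add_div, div_le_div_iff₀ (by positivity) (by positivity)]
    nlinarith

lemma main_eq {d : ℕ} (hd3 : 3 ≤ d) :
    ((1 : ℂ) / ((d : ℂ) ^ (d : ℕ)) ^ 3) •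
        (∑ f : (Fin d → Fin d) × (Fin d → Fin d) × (Fin d → Fin d),
          ((threeFold d f.1 f.2.1 f.2.2) ⊗ₖ (threeFold d f.1 f.2.1 f.2.2)) * PiEq d *
            ((threeFold d f.1 f.2.1 f.2.2) ⊗ₖ (threeFold d f.1 f.2.1 f.2.2))ᴴ)
      - ((2 : ℂ) / ((d : ℂ) + 1)) • PiSym d = Dclosed d := by
  have hd0 : d ≠ 0 := by omega
  have hdc : (d : ℂ) ≠ 0 := Nat.cast_ne_zero.mpr hd0
  have hdc1 : (d : ℂ) + 1 ≠ 0 := by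
    have h : ((d + 1 : ℕ) : ℂ) ≠ 0 := Nat.cast_ne_zero.mpr (by omega)
    push_cast at h
    exact h
  have hdd : ((d : ℂ) ^ d) ≠ 0 := pow_ne_zero _ hdc
  have hc1 : ((coefR1 d : ℝ) : ℂ) = 1 / (d : ℂ) - 1 / (d : ℂ) ^ 2 - 1 / ((d : ℂ) + 1) := by
    rw [coefR1]; push_cast; ring
  have hc2 : ((coefR2 d : ℝ) : ℂ) = 1 / (d : ℂ) ^ 2 := by
    rw [coefR2]; push_cast; ring
  rw [total_sum hd3, PiSym, Dclosed, hc1, hc2]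
  match_scalars <;> field_simp <;> ring


/-- the three-fold twirl of `Π^eq` is `1/(d(d+1))`-close in operator norm to
`(2/(d+1)) Π^sym`. -/
theorem threeFold_approximate_design (d : ℕ) (hd : 3 ≤ d) :
    opNorm
        (((1 : ℂ) / ((d : ℂ) ^ (d : ℕ)) ^ 3) •
            ∑ f : (Fin d → Fin d) × (Fin d → Fin d) × (Fin d → Fin d),
              ((threeFold d f.1 f.2.1 f.2.2) ⊗ₖ (threeFold d f.1 f.2.1 f.2.2)) * PiEq d *
                ((threeFold d f.1 f.2.1 f.2.2) ⊗ₖ (threeFold d f.1 f.2.1 f.2.2))ᴴ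
          - ((2 : ℂ) / ((d : ℂ) + 1)) • PiSym d)
      ≤ 1 / ((d : ℝ) * ((d : ℝ) + 1)) := by
  rw [main_eq hd]
  refine opNorm_le_schur _ _ (by positivity) (fun p => Dclosed_row hd p) fun q => ?_
  calc ∑ p, ‖Dclosed d p q‖ = ∑ p, ‖Dclosed d q p‖ :=
        Finset.sum_congr rfl fun p _ => by rw [Dclosed_symm]
    _ ≤ 1 / ((d : ℝ) * ((d : ℝ) + 1)) := Dclosed_row hd q
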